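/- Let P be a measure space and H = L²(P, ℂ). Let h₀, h₀* ∈ H with ⟪h₀, h₀*⟫ = 1, let w ∈ L∞(P, ℂ), let V, K_x : ℝ → ℂ, and let K_z : ℝ → L∞(P, ℂ) be such that the map z ↦ (K_z z) · h₀ (pointwise multiplication, as an element of H) is differentiable. Define the effective coefficients w_ef = ⟪w · h₀, h₀*⟫ and K_{z,ef}(z) = ⟪(K_z z) · h₀, h₀*⟫. Let φ : ℝ × ℝ × ℝ → ℂ (arguments x, z, t) be twice continuously differentiable and set u(x,z,t) = φ(x,z,t) • h₀ ∈ H. Then for every (x,z,t), ⟪∂_t u + V(z) ∂_x u − w·u_z − K_x(z) ∂²_x u − ∂_z((K_z z)·∂_z u), h₀*⟫ = ∂_t φ + V(z) ∂_x φ − w_ef ∂_z φ − K_x(z) ∂²_x φ − ∂_z(K_{z,ef}(z) ∂_z φ). In particular, the solvability condition ⟪l₁, h₀*⟫ = 0 (where l₁ is the left-hand side) holds at (x,z,t) if and only if φ satisfies the effective turbulent diffusion equation ∂_t φ + V(z) ∂_x φ − w_ef ∂_z φ − K_x(z) ∂²_x φ − ∂_z(K_{z,ef}(z) ∂_z φ)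 = 0 there. -/

import Mathlib

open MeasureTheory InnerProductSpace

/-- Pointwise multiplication of an `L∞` function with an `L²` function,
as an element of `L²`. -/
noncomputable def linftySMul {P : Type*} [MeasurableSpace P] {μ : Measure P}
    (w : Lp ℂ ⊤ μ) (f : Lp ℂ 2 μ) : Lp ℂ 2 μ :=
  ((Lp.memLp f).smul (Lp.memLp w)).toLp ((w : P → ℂ) • (f : P → ℂ))

lemma linftySMul_smul_right {P : Type*} [MeasurableSpace P] {μ : Measure P}
    (w : Lp ℂ ⊤ μ) (c : ℂ) (f : Lp ℂ 2 μ) :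
    linftySMul w (c • f) = c • linftySMul w f := by
  unfold linftySMul
  rw [← MemLp.toLp_const_smul]
  apply MemLp.toLp_congr
  filter_upwards [Lp.coeFn_smul c f] with p hp
  simp only [Pi.mul_apply, Pi.smul_apply, hp, smul_eq_mul]
  ring

/-- Solvability condition for the order-`ε²` equation: pairing the operator
`l₁ = ∂_t u + V ∂_x u − w ∂_z u − K_x ∂²_x u − ∂_z(K_z ∂_z u)` applied to
`u = φ • h₀` with the adjoint zero-eigenfunction `h₀*` gives exactly the effective
turbulent diffusion operator applied to `φ`; in particular `(l₁, h₀*) = 0` iff `φ`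
satisfies the effective equation.  The bilinear pairing `(f, h₀*)` of the paper is
realized as `⟪h₀*, f⟫`, the slot of the inner product that is linear in `f`. -/
theorem effective_equation_from_solvability
    {P : Type*} [MeasurableSpace P] {μ : Measure P}
    (h₀ hstar : Lp ℂ 2 μ) (hnorm : (inner ℂ hstar h₀ : ℂ) = 1)
    (w : Lp ℂ ⊤ μ) (V Kx : ℝ → ℂ) (Kz : ℝ → Lp ℂ ⊤ μ)
    (hKz : ∀ z : ℝ, DifferentiableAt ℝ (fun s : ℝ => linftySMul (Kz s) h₀) z)
    (φ : ℝ → ℝ → ℝ → ℂ)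
    (hφ : ContDiff ℝ 2 (fun q : ℝ × ℝ × ℝ => φ q.1 q.2.1 q.2.2))
    -- the partial derivatives of `φ` and of the `L²`-valued function `u = φ • h₀`
    (φt : ℝ → ℝ → ℝ → ℂ) (hφt : ∀ x z t, HasDerivAt (fun s => φ x z s) (φt x z t) t)
    (φx : ℝ → ℝ → ℝ → ℂ) (hφx : ∀ x z t, HasDerivAt (fun s => φ s z t) (φx x z t) x)
    (φz : ℝ → ℝ → ℝ → ℂ) (hφz : ∀ x z t, HasDerivAt (fun s => φ x s t) (φz x z t) z)
    (φxx : ℝ → ℝ → ℝ → ℂ) (hφxx : ∀ x z t, HasDerivAt (fun s => φx s z t) (φxx x z t) x) :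
    ∀ x z t : ℝ,
      -- `⟪l₁, h₀*⟫`, with `l₁` built from `u = φ • h₀` and
      -- `∂_z((K_z z)·∂_z u)` computed as the derivative of `s ↦ (K_z s)·(∂_z u)(x,s,t)`
      (inner ℂ hstar
          (φt x z t • h₀ + V z • (φx x z t • h₀) - linftySMul w (φz x z t • h₀)
            - Kx z • (φxx x z t • h₀)
            - deriv (fun s : ℝ => linftySMul (Kz s) (φz x s t • h₀)) z) : ℂ)
        = φt x z t + V z * φx x z t
            - (inner ℂ hstar (linftySMul w h₀) : ℂ) * φz x z t
            - Kx z * φxx x z t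
            - deriv (fun s : ℝ => (inner ℂ hstar (linftySMul (Kz s) h₀) : ℂ) * φz x s t) z
      ∧ ((inner ℂ hstar
            (φt x z t • h₀ + V z • (φx x z t • h₀) - linftySMul w (φz x z t • h₀)
              - Kx z • (φxx x z t • h₀)
              - deriv (fun s : ℝ => linftySMul (Kz s) (φz x s t • h₀)) z) : ℂ) = 0
          ↔ φt x z t + V z * φx x z t
              - (inner ℂ hstar (linftySMul w h₀) : ℂ) * φz x z t
              - Kx z * φxx x z t
              - deriv (fun s : ℝ => (inner ℂ hstar (linftySMul (Kz s) h₀) : ℂ) * φz x s t) z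
            = 0) := by
  intro x z t
  set g : ℝ → Lp ℂ 2 μ := fun s => linftySMul (Kz s) h₀ with hg
  -- differentiability of s ↦ φz x s t
  have hψ : ContDiff ℝ 2 (fun s : ℝ => φ x s t) := by
    have : (fun s : ℝ => φ x s t)
        = (fun q : ℝ × ℝ × ℝ => φ q.1 q.2.1 q.2.2) ∘ (fun s : ℝ => (x, s, t)) := rfl
    rw [this]
    exact hφ.comp (contDiff_const.prodMk (contDiff_id.prodMk contDiff_const))
  have hder : (fun s : ℝ => φz x s t) = deriv (fun s => φ x s t) := by
    funext s; exact ((hφz x s t).deriv).symm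
  have hdiff : DifferentiableAt ℝ (fun s : ℝ => φz x s t) z := by
    rw [hder]
    have h2 : ContDiff ℝ ((1 : ℕ) + 1) (fun s : ℝ => φ x s t) := by
      exact_mod_cast hψ
    have := (contDiff_succ_iff_deriv.mp h2).2.2
    exact (this.differentiable (by norm_num)).differentiableAt
  set c' : ℂ := deriv (fun s : ℝ => φz x s t) z with hc'def
  have hc' : HasDerivAt (fun s : ℝ => φz x s t) c' z := hdiff.hasDerivAt
  have hgz : HasDerivAt g (deriv g z) z := (hKz z).hasDerivAt
  set g' : Lp ℂ 2 μ := deriv g z with hg'def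
  -- derivative of the L²-valued flux
  have hF : HasDerivAt (fun s : ℝ => φz x s t • g s) (φz x z t • g' + c' • g z) z :=
    hc'.smul hgz
  have hFeq : (fun s : ℝ => linftySMul (Kz s) (φz x s t • h₀))
      = fun s : ℝ => φz x s t • g s := by
    funext s; exact linftySMul_smul_right _ _ _
  have hderivF : deriv (fun s : ℝ => linftySMul (Kz s) (φz x s t • h₀)) z
      = φz x z t • g' + c' • g z := by
    rw [hFeq]; exact hF.deriv
  -- derivative of the scalar flux
  have hinner : HasDerivAt (fun s : ℝ => (inner ℂ hstar (g s) : ℂ)) (inner ℂ hstar g') z := by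
    have := (((innerSL ℂ hstar).restrictScalars ℝ).hasFDerivAt (x := g z)).comp_hasDerivAt z hgz
    simp at this
    exact this
  have hR : HasDerivAt (fun s : ℝ => (inner ℂ hstar (linftySMul (Kz s) h₀) : ℂ) * φz x s t)
      ((inner ℂ hstar g' : ℂ) * φz x z t + (inner ℂ hstar (g z) : ℂ) * c') z := hinner.mul hc'
  have hderivR : deriv (fun s : ℝ => (inner ℂ hstar (linftySMul (Kz s) h₀) : ℂ) * φz x s t) z
      = (inner ℂ hstar g' : ℂ) * φz x z t + (inner ℂ hstar (g z) : ℂ) * c' := hR.deriv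
  have main :
      (inner ℂ hstar
          (φt x z t • h₀ + V z • (φx x z t • h₀) - linftySMul w (φz x z t • h₀)
            - Kx z • (φxx x z t • h₀)
            - deriv (fun s : ℝ => linftySMul (Kz s) (φz x s t • h₀)) z) : ℂ)
        = φt x z t + V z * φx x z t
            - (inner ℂ hstar (linftySMul w h₀) : ℂ) * φz x z t
            - Kx z * φxx x z t
            - deriv (fun s : ℝ => (inner ℂ hstar (linftySMul (Kz s) h₀) : ℂ) * φz x s t) z := by
    rw [hderivF, hderivR, linftySMul_smul_right]
    simp only [inner_add_right, inner_sub_right, inner_smul_right, hnorm]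
    ring
  exact ⟨main, by rw [main]⟩
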